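/- In X = ℝ⁴ with the ℓ¹-norm, let Y = {x ∈ ℝ⁴ : x 1 + x 2 + x 3 + x 4 = 0}, which has basis u₂, u₃, u₄ where u_k = e₁ − e_k, and let T : Y → Y be the linear operator determined by T u₂ = ½(u₂ + u₃ − u₄), T u₃ = ½(u₂ − u₃ + u₄), T u₄ = ½(u₂ − u₃ − u₄). Then ‖T‖ = 1, and every linear operator S : ℝ⁴₁ → ℝ⁴₁ with S y = T y for all y ∈ Y satisfies ‖S‖ ≥ 5/4. In particular, ℝ⁴ with the ℓ¹-norm does not have the self-extension property. -/

import Mathlib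

noncomputable section

abbrev X4 : Type := PiLp 1 fun _ : Fin 4 => ℝ

def e4 (i : Fin 4) : X4 := (WithLp.equiv 1 (Fin 4 → ℝ)).symm (Pi.single i 1)

/-- `u_k = e₁ - e_k` (indexed by `Fin 4`, so `u4 1, u4 2, u4 3` are `u₂, u₃, u₄`). -/
def u4 (k : Fin 4) : X4 := e4 0 - e4 k

def Y4 : Submodule ℝ X4 :=
  LinearMap.ker ((∑ i : Fin 4, LinearMap.proj i) ∘ₗ
    (WithLp.linearEquiv 1 ℝ (Fin 4 → ℝ)).toLinearMap)

lemma u4_mem (k : Fin 4) : u4 k ∈ Y4 := by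
  simp [Y4, u4, e4, LinearMap.mem_ker, LinearMap.sum_apply, Finset.sum_sub_distrib,
    Finset.sum_pi_single]

def SelfExt (X : Type*) [NormedAddCommGroup X] [NormedSpace ℝ X] : Prop :=
  ∀ (Y : Submodule ℝ X), IsClosed (Y : Set X) → ∀ T : Y →L[ℝ] Y,
    ∃ S : X →L[ℝ] X, (∀ y : Y, S y = (T y : X)) ∧ ‖S‖ = ‖T‖

/-!
In the coordinates `x = -(x₂ u₂ + x₃ u₃ + x₄ u₄)` of `Y`, the operator `T` is the explicit map
`tMap`, and `‖T x‖₁ ≤ ‖x‖₁` is an inequality between sums of absolute values, with equality at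
`u₂`. An extension `S` is determined by `v = S e₁`, since `S e_k = v - T u_k` (with `u₁ = 0`).
As `‖e_k‖₁ = 1`, we get `4 ‖S‖ ≥ ∑_k ‖v - T u_k‖₁`, and in every coordinate the four values of
the points `T u_k` pair off, so that this sum is at least `5` whatever `v` is.
-/

lemma norm_X4 (x : X4) : ‖x‖ = |x 0| + |x 1| + |x 2| + |x 3| := by
  simp [PiLp.norm_eq_of_L1, Fin.sum_univ_four]

@[simp] lemma e4_apply (i j : Fin 4) : e4 i j = if j = i then 1 else 0 := by
  simp [e4]

lemma norm_e4 (i : Fin 4) : ‖e4 i‖ = 1 := by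
  simp [e4]

lemma mem_Y4 (x : X4) : x ∈ Y4 ↔ x 0 + x 1 + x 2 + x 3 = 0 := by
  simp [Y4, LinearMap.mem_ker, Fin.sum_univ_four]

lemma eq_sum_smul_u4_of_mem_Y4 {x : X4} (hx : x ∈ Y4) :
    x = (-x 1) • u4 1 + (-x 2) • u4 2 + (-x 3) • u4 3 := by
  ext i
  fin_cases i <;> simp [u4]
  linarith [(mem_Y4 x).1 hx]

/-- `T` in the coordinates `x = -(x 1 • u4 1 + x 2 • u4 2 + x 3 • u4 3)`, extended to `ℝ⁴` by
ignoring `x 0`. -/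
def tMap : X4 →ₗ[ℝ] X4 where
  toFun x := WithLp.toLp 1 ![(-x 1 - x 2 + x 3) / 2, (x 1 + x 2 + x 3) / 2,
    (x 1 - x 2 - x 3) / 2, (-x 1 + x 2 - x 3) / 2]
  map_add' x y := by ext i; fin_cases i <;> simp <;> ring
  map_smul' c x := by ext i; fin_cases i <;> simp <;> ring

lemma tMap_apply (x : X4) :
    tMap x = WithLp.toLp 1 ![(-x 1 - x 2 + x 3) / 2, (x 1 + x 2 + x 3) / 2,
      (x 1 - x 2 - x 3) / 2, (-x 1 + x 2 - x 3) / 2] :=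
  rfl

lemma tMap_mem (x : X4) : tMap x ∈ Y4 := by
  rw [mem_Y4]
  simp [tMap_apply]
  ring

lemma tMap_u4_one : tMap (u4 1) = (1 / 2 : ℝ) • (u4 1 + u4 2 - u4 3) := by
  ext i; fin_cases i <;> norm_num [tMap_apply, u4, Fin.ext_iff]

lemma tMap_u4_two : tMap (u4 2) = (1 / 2 : ℝ) • (u4 1 - u4 2 + u4 3) := by
  ext i; fin_cases i <;> norm_num [tMap_apply, u4, Fin.ext_iff]

lemma tMap_u4_three : tMap (u4 3) = (1 / 2 : ℝ) • (u4 1 - u4 2 - u4 3) := by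
  ext i; fin_cases i <;> norm_num [tMap_apply, u4, Fin.ext_iff]

lemma coe_apply_eq_tMap (T : Y4 →L[ℝ] Y4)
    (h1 : (T ⟨u4 1, u4_mem 1⟩ : X4) = (1 / 2 : ℝ) • (u4 1 + u4 2 - u4 3))
    (h2 : (T ⟨u4 2, u4_mem 2⟩ : X4) = (1 / 2 : ℝ) • (u4 1 - u4 2 + u4 3))
    (h3 : (T ⟨u4 3, u4_mem 3⟩ : X4) = (1 / 2 : ℝ) • (u4 1 - u4 2 - u4 3)) (y : Y4) :
    (T y : X4) = tMap y := by
  obtain ⟨x, hx⟩ := y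
  have hy : (⟨x, hx⟩ : Y4) =
      (-x 1) • ⟨u4 1, u4_mem 1⟩ + (-x 2) • ⟨u4 2, u4_mem 2⟩ + (-x 3) • ⟨u4 3, u4_mem 3⟩ :=
    Subtype.ext (eq_sum_smul_u4_of_mem_Y4 hx)
  rw [hy]
  simp only [map_add, map_smul, Submodule.coe_add, Submodule.coe_smul, h1, h2, h3,
    tMap_u4_one, tMap_u4_two, tMap_u4_three]

lemma abs_tMap_sum_le (p q r : ℝ) :
    |(-p - q + r) / 2| + |(p + q + r) / 2| + |(p - q - r) / 2| + |(-p + q - r) / 2| ≤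
      |-(p + q + r)| + |p| + |q| + |r| := by
  have lb (x : ℝ) : x ≤ |x| ∧ -x ≤ |x| := ⟨le_abs_self x, neg_le_abs x⟩
  simp only [abs_div, abs_two, abs_neg]
  rcases abs_cases (-p - q + r) with ⟨e1, -⟩ | ⟨e1, -⟩ <;>
    rcases abs_cases (p - q - r) with ⟨e2, -⟩ | ⟨e2, -⟩ <;>
    rcases abs_cases (-p + q - r) with ⟨e3, -⟩ | ⟨e3, -⟩ <;>
    linarith [lb p, lb q, lb r, lb (p + q + r)]

lemma norm_tMap_le {x : X4} (hx : x ∈ Y4) : ‖tMap x‖ ≤ ‖x‖ := by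
  have hx0 : x 0 = -(x 1 + x 2 + x 3) := by linarith [(mem_Y4 x).1 hx]
  simpa [norm_X4, tMap_apply, hx0] using abs_tMap_sum_le (x 1) (x 2) (x 3)

lemma norm_u4_one : ‖u4 1‖ = 2 := by
  norm_num [norm_X4, u4, Fin.ext_iff]

lemma norm_tMap_u4_one : ‖tMap (u4 1)‖ = 2 := by
  simp [norm_X4, tMap_apply, u4]
  norm_num

lemma opNorm_eq_one_of_coe_apply_eq_tMap (T : Y4 →L[ℝ] Y4) (hT : ∀ y, (T y : X4) = tMap y) :
    ‖T‖ = 1 := by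
  refine le_antisymm (T.opNorm_le_bound zero_le_one fun y => ?_) ?_
  · simpa [← Submodule.norm_coe, hT] using norm_tMap_le y.2
  · calc (1 : ℝ) = ‖T ⟨u4 1, u4_mem 1⟩‖ / ‖(⟨u4 1, u4_mem 1⟩ : Y4)‖ := by
          simp only [← Submodule.norm_coe, hT, norm_tMap_u4_one, norm_u4_one]
          norm_num
      _ ≤ ‖T‖ := T.ratio_le_opNorm _

/-- In each coordinate, `|t - a| + |t - b| ≥ |a - b|` for a suitable pairing of the four values;
the resulting widths are `3/2, 1/2, 3/2, 3/2`. -/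
lemma five_le_sum_norm_sub_tMap_u4 (v : X4) : 5 ≤ ∑ k, ‖v - tMap (u4 k)‖ := by
  have lb (x : ℝ) : x ≤ |x| ∧ -x ≤ |x| := ⟨le_abs_self x, neg_le_abs x⟩
  simp [Fin.sum_univ_four, norm_X4, tMap_apply, u4]
  norm_num
  linarith [lb (v 0), lb (v 0 - 1/2), lb (v 0 + 1/2), lb (v 1), lb (v 1 - 1/2), lb (v 1 + 1/2),
    lb (v 2), lb (v 2 - 1/2), lb (v 2 + 1/2), lb (v 3), lb (v 3 - 1/2), lb (v 3 + 1/2)]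

lemma sum_norm_apply_e4_le (S : X4 →L[ℝ] X4) : ∑ k, ‖S (e4 k)‖ ≤ 4 * ‖S‖ :=
  calc ∑ k, ‖S (e4 k)‖ ≤ ∑ _k : Fin 4, ‖S‖ :=
        Finset.sum_le_sum fun k _ => S.unit_le_opNorm _ (norm_e4 k).le
    _ = 4 * ‖S‖ := by simp

lemma five_div_four_le_opNorm_of_extends_tMap (S : X4 →L[ℝ] X4)
    (hS : ∀ y : Y4, S y = tMap y) : 5 / 4 ≤ ‖S‖ := by
  have hSe (k : Fin 4) : S (e4 k) = S (e4 0) - tMap (u4 k) := by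
    rw [← hS ⟨u4 k, u4_mem k⟩, ← map_sub]
    simp [u4]
  have := five_le_sum_norm_sub_tMap_u4 (S (e4 0))
  simp only [← hSe] at this
  linarith [sum_norm_apply_e4_le S]

def tMapY4 : Y4 →L[ℝ] Y4 :=
  (tMap.restrict fun x _ => tMap_mem x).toContinuousLinearMap

theorem R4_l1_fails_selfExt :
    (∀ T : Y4 →L[ℝ] Y4,
      (T ⟨u4 1, u4_mem 1⟩ : X4) = (1 / 2 : ℝ) • (u4 1 + u4 2 - u4 3) →
      (T ⟨u4 2, u4_mem 2⟩ : X4) = (1 / 2 : ℝ) • (u4 1 - u4 2 + u4 3) →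
      (T ⟨u4 3, u4_mem 3⟩ : X4) = (1 / 2 : ℝ) • (u4 1 - u4 2 - u4 3) →
        ‖T‖ = 1 ∧
        ∀ S : X4 →L[ℝ] X4, (∀ y : Y4, S y = (T y : X4)) → 5 / 4 ≤ ‖S‖) ∧
    ¬ SelfExt X4 := by
  refine ⟨fun T h1 h2 h3 => ?_, fun hSelfExt => ?_⟩
  · have hT := coe_apply_eq_tMap T h1 h2 h3
    exact ⟨opNorm_eq_one_of_coe_apply_eq_tMap T hT,
      fun S hS => five_div_four_le_opNorm_of_extends_tMap S fun y => (hS y).trans (hT y)⟩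
  · obtain ⟨S, hS, hnorm⟩ :=
      hSelfExt Y4 (Submodule.closed_of_finiteDimensional Y4) tMapY4
    have h := five_div_four_le_opNorm_of_extends_tMap S hS
    rw [hnorm, opNorm_eq_one_of_coe_apply_eq_tMap tMapY4 fun _ => rfl] at h
    norm_num at h

end
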